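/- arXiv:2307.11424 — 2 statements merged into one kernel-verified Lean document; each statement's English description precedes it below -/
import Mathlib

section
/- Consider the cascade system ∂ₜw₁ = −ε₁(x)∂ₓw₁, ∂ₜw₂ = ε₂(x)∂ₓw₂ on [0,1] with boundary conditions w₁(0,t) = q w₂(0,t), w₂(1,t) = z(0,t), where τ∂ₜz = ∂ₓz with z(1,t) = 0. Given initial conditions w₁₀, w₂₀, z₀ ∈ L²([0,1]), the solution given by the method of characteristics satisfies w₁(x,t) = w₂(x,t) = z(x,t) = 0 for all x ∈ [0,1] and all t ≥ t_F, where t_F = τ + ∫₀¹ (1/ε₁(y) + 1/ε₂(y)) dy. -/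
open Set

theorem stmt_8 (τ q : ℝ) (hτ : 0 < τ) (ε₁ ε₂ : ℝ → ℝ)
    (hε₁_cont : ContinuousOn ε₁ (Icc 0 1)) (hε₁_pos : ∀ x ∈ Icc (0:ℝ) 1, 0 < ε₁ x)
    (hε₂_cont : ContinuousOn ε₂ (Icc 0 1)) (hε₂_pos : ∀ x ∈ Icc (0:ℝ) 1, 0 < ε₂ x)
    (φ₁ φ₂ ψ₁ ψ₂ : ℝ → ℝ)
    (hφ₁ : ∀ x, φ₁ x = ∫ ζ in (0:ℝ)..x, 1 / ε₁ ζ)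
    (hφ₂ : ∀ x, φ₂ x = ∫ ζ in (0:ℝ)..x, 1 / ε₂ ζ)
    (hψ₁ : ∀ x ∈ Icc (0:ℝ) 1, ψ₁ (φ₁ x) = x)
    (hψ₂ : ∀ x ∈ Icc (0:ℝ) 1, ψ₂ (φ₂ x) = x)
    (w₁₀ w₂₀ z₀ : ℝ → ℝ) (hcomp : z₀ 1 = 0)
    (w₁ w₂ z : ℝ → ℝ → ℝ)
    (hz : ∀ x t, z x t = if t ≤ τ * (1 - x) then z₀ (x + t / τ) else 0)
    (hw₂ : ∀ x t, w₂ x t =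
      if t ≤ φ₂ 1 - φ₂ x then w₂₀ (ψ₂ (t + φ₂ x)) else z 0 (t + φ₂ x - φ₂ 1))
    (hw₁ : ∀ x t, w₁ x t =
      if t ≤ φ₁ x then w₁₀ (ψ₁ (φ₁ x - t)) else q * w₂ 0 (t - φ₁ x))
    (tF : ℝ) (htF : tF = τ + ∫ y in (0:ℝ)..1, (1 / ε₁ y + 1 / ε₂ y)) :
    ∀ x ∈ Icc (0:ℝ) 1, ∀ t : ℝ, tF ≤ t →
      w₁ x t = 0 ∧ w₂ x t = 0 ∧ z x t = 0 := by
  -- continuity and integrability of the integrands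
  have hc₁ : ContinuousOn (fun ζ => 1 / ε₁ ζ) (Icc 0 1) :=
    continuousOn_const.div hε₁_cont (fun x hx => (hε₁_pos x hx).ne')
  have hc₂ : ContinuousOn (fun ζ => 1 / ε₂ ζ) (Icc 0 1) :=
    continuousOn_const.div hε₂_cont (fun x hx => (hε₂_pos x hx).ne')
  have hint₁ : ∀ a ∈ Icc (0:ℝ) 1, ∀ b ∈ Icc (0:ℝ) 1,
      IntervalIntegrable (fun ζ => 1 / ε₁ ζ) MeasureTheory.volume a b := by
    intro a ha b hb
    exact (hc₁.mono (uIcc_subset_Icc ha hb)).intervalIntegrable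
  have hint₂ : ∀ a ∈ Icc (0:ℝ) 1, ∀ b ∈ Icc (0:ℝ) 1,
      IntervalIntegrable (fun ζ => 1 / ε₂ ζ) MeasureTheory.volume a b := by
    intro a ha b hb
    exact (hc₂.mono (uIcc_subset_Icc ha hb)).intervalIntegrable
  have h01 : (0:ℝ) ∈ Icc (0:ℝ) 1 := ⟨le_refl 0, zero_le_one⟩
  have h11 : (1:ℝ) ∈ Icc (0:ℝ) 1 := ⟨zero_le_one, le_refl 1⟩
  -- positivity of φ₁ 1 and φ₂ 1
  have hφ₁1_pos : 0 < φ₁ 1 := by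
    rw [hφ₁]
    apply intervalIntegral.intervalIntegral_pos_of_pos_on (hint₁ 0 h01 1 h11)
    · intro u hu
      exact one_div_pos.mpr (hε₁_pos u ⟨hu.1.le, hu.2.le⟩)
    · exact zero_lt_one
  have hφ₂1_pos : 0 < φ₂ 1 := by
    rw [hφ₂]
    apply intervalIntegral.intervalIntegral_pos_of_pos_on (hint₂ 0 h01 1 h11)
    · intro u hu
      exact one_div_pos.mpr (hε₂_pos u ⟨hu.1.le, hu.2.le⟩)
    · exact zero_lt_one
  -- φ₂ 0 = 0
  have hφ₂0 : φ₂ 0 = 0 := by rw [hφ₂]; exact intervalIntegral.integral_same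
  -- φ₂ x ≥ 0 on [0,1]
  have hφ₂_nonneg : ∀ x ∈ Icc (0:ℝ) 1, 0 ≤ φ₂ x := by
    intro x hx
    rw [hφ₂]
    apply intervalIntegral.integral_nonneg hx.1
    intro u hu
    exact (one_div_pos.mpr (hε₂_pos u ⟨hu.1, hu.2.trans hx.2⟩)).le
  -- φ₁ x ≤ φ₁ 1 on [0,1]
  have hφ₁_le : ∀ x ∈ Icc (0:ℝ) 1, φ₁ x ≤ φ₁ 1 := by
    intro x hx
    rw [hφ₁, hφ₁]
    have hadd := intervalIntegral.integral_add_adjacent_intervals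
      (hint₁ 0 h01 x hx) (hint₁ x hx 1 h11)
    rw [← hadd]
    have : 0 ≤ ∫ ζ in x..1, 1 / ε₁ ζ := by
      apply intervalIntegral.integral_nonneg hx.2
      intro u hu
      exact (one_div_pos.mpr (hε₁_pos u ⟨hx.1.trans hu.1, hu.2⟩)).le
    linarith
  -- tF = τ + φ₁ 1 + φ₂ 1
  have htF' : tF = τ + φ₁ 1 + φ₂ 1 := by
    rw [htF, hφ₁, hφ₂,
      intervalIntegral.integral_add (hint₁ 0 h01 1 h11) (hint₂ 0 h01 1 h11)]
    ring
  intro x hx t ht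
  have hxt : τ * (1 - x) ≤ τ := by nlinarith [hx.1, hx.2]
  have hφ₂x := hφ₂_nonneg x hx
  have hφ₁x := hφ₁_le x hx
  have hzx : z x t = 0 := by
    rw [hz, if_neg]
    push_neg
    linarith
  have hw₂x : w₂ x t = 0 := by
    rw [hw₂, if_neg, hz, if_neg]
    · push_neg
      have : τ * (1 - 0) = τ := by ring
      rw [this]
      linarith
    · push_neg
      linarith
  refine ⟨?_, hw₂x, hzx⟩
  rw [hw₁, if_neg]
  · set s := t - φ₁ x with hs
    have hs_ge : τ + φ₂ 1 ≤ s := by simp only [hs]; linarith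
    rw [hw₂, if_neg, hz]
    · have harg : s + φ₂ 0 - φ₂ 1 = s - φ₂ 1 := by rw [hφ₂0]; ring
      rw [harg]
      by_cases hcase : s - φ₂ 1 ≤ τ * (1 - 0)
      · rw [if_pos hcase]
        have : s - φ₂ 1 = τ := by nlinarith
        rw [this]
        have : (0:ℝ) + τ / τ = 1 := by field_simp; ring
        rw [this, hcomp, mul_zero]
      · rw [if_neg hcase, mul_zero]
    · push_neg
      rw [hφ₂0]
      linarith
  · push_neg
    linarith
end

section
/- Let a ≥ 0 and f : [0,∞) → ℝ be continuous with f(t) = ∫_{t−a}^{t} k((t−y)/a) f(y) dy + r(t), where k ∈ C([0,1]) and r(t) = 0 for all t ≥ t₁. If additionally a ∫₀¹ |k(u)| du < 1, then f is bounded and f(t) → 0 as t → ∞. -/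
open Set

theorem stmt_18 (a : ℝ) (ha : 0 ≤ a) (f : ℝ → ℝ)
    (hf_cont : ContinuousOn f (Ici 0))
    (k : ℝ → ℝ) (hk : ContinuousOn k (Icc 0 1))
    (r : ℝ → ℝ) (t₁ : ℝ) (hr : ∀ t : ℝ, t₁ ≤ t → r t = 0)
    (heq : ∀ t : ℝ, 0 ≤ t →
      f t = (∫ y in (t - a)..t, k ((t - y) / a) * f y) + r t)
    (hsmall : a * ∫ u in (0:ℝ)..1, |k u| < 1) :
    (∃ M : ℝ, ∀ t : ℝ, 0 ≤ t → |f t| ≤ M) ∧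
    Filter.Tendsto f Filter.atTop (nhds 0) := by
  have hInn : 0 ≤ ∫ u in (0:ℝ)..1, |k u| :=
    intervalIntegral.integral_nonneg zero_le_one (fun u _ => abs_nonneg _)
  set L := a * ∫ u in (0:ℝ)..1, |k u| with hLdef
  have hL0 : 0 ≤ L := mul_nonneg ha hInn
  have hL1 : L < 1 := hsmall
  set t₀ := max t₁ a with ht₀def
  have ht₀a : a ≤ t₀ := le_max_right _ _
  have ht₀0 : (0:ℝ) ≤ t₀ := ha.trans ht₀a
  -- core contraction estimate
  have key : ∀ t, t₀ ≤ t → ∀ S, 0 ≤ S →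
      (∀ y ∈ Icc (t - a) t, |f y| ≤ S) → |f t| ≤ L * S := by
    intro t ht S hS hbd
    have ht0 : (0:ℝ) ≤ t := ht₀0.trans ht
    have ht1 : t₁ ≤ t := (le_max_left _ _).trans ht
    have hta : t - a ≤ t := by linarith
    have hta0 : 0 ≤ t - a := by have := ht₀a.trans ht; linarith
    have heqt : f t = ∫ y in (t - a)..t, k ((t - y) / a) * f y := by
      rw [heq t ht0, hr t ht1, add_zero]
    rcases eq_or_lt_of_le ha with h0 | hapos
    · subst h0
      rw [heqt]
      simp only [sub_zero, intervalIntegral.integral_same, abs_zero]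
      exact mul_nonneg hL0 hS
    · have hmem : Set.MapsTo (fun y => (t - y) / a) (Icc (t - a) t) (Icc (0:ℝ) 1) := by
        intro y hy
        obtain ⟨h1, h2⟩ := hy
        constructor
        · apply div_nonneg _ ha; linarith
        · rw [div_le_one hapos]; linarith
      have hkc : ContinuousOn (fun y => k ((t - y) / a)) (Icc (t - a) t) :=
        hk.comp ((continuous_const.sub continuous_id).div_const a).continuousOn hmem
      have hfc : ContinuousOn f (Icc (t - a) t) :=
        hf_cont.mono (fun y hy => hta0.trans hy.1)
      have hg : ContinuousOn (fun y => k ((t - y) / a) * f y) (Icc (t - a) t) :=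
        hkc.mul hfc
      have hInt : IntervalIntegrable (fun y => k ((t - y) / a) * f y) MeasureTheory.volume (t - a) t :=
        hg.intervalIntegrable_of_Icc hta
      have hIntk : IntervalIntegrable (fun y => |k ((t - y) / a)| * S) MeasureTheory.volume (t - a) t :=
        (hkc.abs.mul continuousOn_const).intervalIntegrable_of_Icc hta
      have hsubst : (∫ y in (t - a)..t, |k ((t - y) / a)|) = L := by
        have h1 : (∫ y in (t - a)..t, |k ((t - y) / a)|)
            = ∫ x in (0:ℝ)..a, |k (x / a)| := by
          have := intervalIntegral.integral_comp_sub_left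
            (a := t - a) (b := t) (fun x => |k (x / a)|) t
          simpa using this
        have h2 := intervalIntegral.integral_comp_div (a := 0) (b := a) (c := a)
          (fun x => |k x|) hapos.ne'
        rw [h1, h2, zero_div, div_self hapos.ne', smul_eq_mul]
      calc |f t| = |∫ y in (t - a)..t, k ((t - y) / a) * f y| := by rw [heqt]
        _ ≤ ∫ y in (t - a)..t, |k ((t - y) / a) * f y| :=
            intervalIntegral.abs_integral_le_integral_abs hta
        _ ≤ ∫ y in (t - a)..t, |k ((t - y) / a)| * S := by
            refine intervalIntegral.integral_mono_on hta hInt.abs hIntk ?_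
            intro y hy
            rw [abs_mul]
            exact mul_le_mul_of_nonneg_left (hbd y hy) (abs_nonneg _)
        _ = (∫ y in (t - a)..t, |k ((t - y) / a)|) * S :=
            intervalIntegral.integral_mul_const _ _
        _ = L * S := by rw [hsubst]
  -- bound on the initial compact interval
  obtain ⟨M₀, hM₀⟩ : ∃ M, ∀ t ∈ Icc (0:ℝ) t₀, |f t| ≤ M := by
    obtain ⟨M, hM⟩ := isCompact_Icc.exists_bound_of_continuousOn
      (hf_cont.mono (Icc_subset_Ici_self : Icc (0:ℝ) t₀ ⊆ Ici 0))
    exact ⟨M, fun t ht => hM t ht⟩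
  set M := max M₀ 0 with hMdef
  have hM0 : (0:ℝ) ≤ M := le_max_right _ _
  have hMbd : ∀ t ∈ Icc (0:ℝ) t₀, |f t| ≤ M := fun t ht =>
    (hM₀ t ht).trans (le_max_left _ _)
  -- global bound
  have hbdd : ∀ t, 0 ≤ t → |f t| ≤ M := by
    intro t ht
    rcases le_or_gt t t₀ with h | h
    · exact hMbd t ⟨ht, h⟩
    · have hconts : ContinuousOn (fun s => |f s|) (Icc 0 t) :=
        (hf_cont.mono (Icc_subset_Ici_self : Icc (0:ℝ) t ⊆ Ici 0)).abs
      obtain ⟨c, hc, hcmax⟩ := isCompact_Icc.exists_isMaxOn (nonempty_Icc.mpr ht) hconts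
      have hfc : ∀ y ∈ Icc (0:ℝ) t, |f y| ≤ |f c| := fun y hy => hcmax hy
      have hle : |f t| ≤ |f c| := hfc t ⟨ht, le_refl t⟩
      rcases le_or_gt c t₀ with hc0 | hc1
      · exact hle.trans (hMbd c ⟨hc.1, hc0⟩)
      · have hkey : |f c| ≤ L * |f c| := by
          refine key c hc1.le _ (abs_nonneg _) ?_
          intro y hy
          refine hfc y ⟨?_, hy.2.trans hc.2⟩
          have := hy.1
          have h1 : a ≤ c := ht₀a.trans hc1.le
          linarith
        have h0 : |f c| ≤ 0 := by nlinarith [abs_nonneg (f c)]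
        exact hle.trans (h0.trans hM0)
  -- iterated decay
  have hiter : ∀ n : ℕ, ∀ t, t₀ + n * a ≤ t → |f t| ≤ L ^ n * M := by
    intro n
    induction n with
    | zero => intro t ht; simpa using hbdd t (ht₀0.trans (by simpa using ht))
    | succ n ih =>
      intro t ht
      have hna : (0:ℝ) ≤ (n : ℝ) * a := mul_nonneg (Nat.cast_nonneg n) ha
      have ht' : t₀ + (n : ℝ) * a ≤ t - a := by push_cast at ht; linarith
      have hkey : |f t| ≤ L * (L ^ n * M) := by
        refine key t (by linarith) _ (mul_nonneg (pow_nonneg hL0 n) hM0) ?_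
        intro y hy
        exact ih y (ht'.trans hy.1)
      calc |f t| ≤ L * (L ^ n * M) := hkey
        _ = L ^ (n + 1) * M := by ring
  refine ⟨⟨M, hbdd⟩, ?_⟩
  rw [Metric.tendsto_atTop]
  intro ε hε
  have htend : Filter.Tendsto (fun n : ℕ => L ^ n * M) Filter.atTop (nhds 0) := by
    simpa using (tendsto_pow_atTop_nhds_zero_of_lt_one hL0 hL1).mul_const M
  obtain ⟨n, hn⟩ := (htend.eventually (gt_mem_nhds hε)).exists
  refine ⟨t₀ + n * a, fun t ht => ?_⟩
  rw [Real.dist_eq, sub_zero]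
  exact lt_of_le_of_lt (hiter n t ht) hn
end
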